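/- Let n, p be positive integers with gcd(n, n+p) = 1. The restriction operator E_γ P(t) = P(cos(nt), cos((n+p)t)) is an isometry from the polynomial space Π_{n,p}^{2,L} = span{T_i(x)T_j(y) : (i,j) ∈ Γ_{n,p}^L} with the product-Chebyshev inner product into the even trigonometric polynomials of degree ≤ n(n+p) with inner product (1/π)∫₀^π q₁q₂ dt; in particular ⟨P₁,P₂⟩ = (1/π)∫₀^π E_γP₁(t)·E_γP₂(t) dt for all P₁, P₂ ∈ Π_{n,p}^{2,L}. -/

import Mathlib

/-!
Substituting `x = cos θ`, `y = cos φ` turns the Chebyshev inner product of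
`∑ c_ij T_i(x) T_j(y)` and `∑ d_kl T_k(x) T_l(y)` into `π⁻²` times the sum of
`c_ij d_kl ∫∫ cos iθ cos kθ cos jφ cos lφ` over `[0, π]²`, while restricting to the curve
`(cos nt, cos (n+p)t)` replaces `(θ, φ)` by `(nt, (n+p)t)` and `π⁻²∫∫` by `π⁻¹∫`. After
product-to-sum both become combinations of the integrals of `cos aθ cos bφ` with `a = i ± k`,
`b = j ± l`, and these agree on the torus and on the curve unless `a n = ± b (n+p)` with
`(a, b) ≠ 0`. By coprimality that forces `|a| ≥ n + p` and `|b| ≥ n`, which is impossible for two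
indices of `Γ`. The same product-to-sum formula shows that the restriction is a cosine polynomial
with frequencies `i n ± j (n+p) ≤ n (n+p)`.
-/

open Real Polynomial.Chebyshev Finset

/-- The index set `Γ^L_{n,p}`. -/
def lissajousIndexSet (n p : ℕ) : Set (ℕ × ℕ) :=
  {ij | (ij.1 : ℝ) / (n + p) + (ij.2 : ℝ) / n < 1 ∨ ij = (0, n)}

theorem mem_lissajousIndexSet_iff {n p : ℕ} (hn : 0 < n) {ij : ℕ × ℕ} :
    ij ∈ lissajousIndexSet n p ↔
      ij.1 * n + ij.2 * (n + p) < n * (n + p) ∨ ij.1 = 0 ∧ ij.2 = n := by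
  have hn' : (0 : ℝ) < n := by exact_mod_cast hn
  rw [lissajousIndexSet, Set.mem_ofPred_eq, div_add_div _ _ (by positivity) hn'.ne',
    div_lt_one (by positivity), ← Nat.cast_lt (α := ℝ), Prod.ext_iff]
  push_cast
  constructor <;> rintro (h | h) <;> first | exact .inr h | exact .inl (by linarith)

theorem weight_le_of_mem_lissajousIndexSet {n p : ℕ} (hn : 0 < n) {ij : ℕ × ℕ}
    (h : ij ∈ lissajousIndexSet n p) : ij.1 * n + ij.2 * (n + p) ≤ n * (n + p) := by
  rcases (mem_lissajousIndexSet_iff hn).1 h with h | ⟨h1, h2⟩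
  · exact h.le
  · simp [h1, h2, mul_comm]

/-- Otherwise the two weights would add up to at least `2 n (n + p)`, so both indices would be the
corner `(0, n)`. -/
theorem add_lt_or_add_lt_of_mem_lissajousIndexSet {n p : ℕ} (hn : 0 < n) {ij kl : ℕ × ℕ}
    (hij : ij ∈ lissajousIndexSet n p) (hkl : kl ∈ lissajousIndexSet n p) :
    ij.1 + kl.1 < n + p ∨ ij.2 + kl.2 < n := by
  by_contra! h
  rcases (mem_lissajousIndexSet_iff hn).1 hij with hij | ⟨hi, hj⟩ <;>
    rcases (mem_lissajousIndexSet_iff hn).1 hkl with hkl | ⟨hk, hl⟩ <;>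
    nlinarith

def cosPolynomials (D : ℕ) : Submodule ℝ (ℝ → ℝ) where
  carrier := {f | ∃ a : ℕ → ℝ, ∀ t, f t = ∑ m ∈ range (D + 1), a m * cos (m * t)}
  add_mem' := by
    rintro f g ⟨a, ha⟩ ⟨b, hb⟩
    exact ⟨a + b, fun t => by simp [ha, hb, add_mul, sum_add_distrib]⟩
  zero_mem' := ⟨0, by simp⟩
  smul_mem' := by
    rintro c f ⟨a, ha⟩
    exact ⟨c • a, fun t => by simp [ha, mul_sum, mul_assoc]⟩

theorem cos_nat_mul_mem_cosPolynomials {m D : ℕ} (h : m ≤ D) :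
    (fun t => cos (m * t)) ∈ cosPolynomials D :=
  ⟨fun k => if k = m then 1 else 0, fun t => by simp [Nat.lt_succ_of_le h]⟩

theorem cos_mul_cos_mem_cosPolynomials {a b D : ℕ} (h : a + b ≤ D) :
    (fun t => cos (a * t) * cos (b * t)) ∈ cosPolynomials D := by
  wlog hba : b ≤ a generalizing a b
  · simpa only [mul_comm] using this (a := b) (b := a) (by omega) (by omega)
  have heq : (fun t => cos (a * t) * cos (b * t)) =
      (2⁻¹ : ℝ) • (fun t => cos ((a + b : ℕ) * t)) +
        (2⁻¹ : ℝ) • (fun t => cos ((a - b : ℕ) * t)) := by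
    funext t
    simp only [Pi.add_apply, Pi.smul_apply, smul_eq_mul]
    rw [Nat.cast_sub hba]
    push_cast
    simp only [add_mul, sub_mul, cos_add, cos_sub]
    ring
  rw [heq]
  exact add_mem (Submodule.smul_mem _ _ (cos_nat_mul_mem_cosPolynomials h))
    (Submodule.smul_mem _ _ (cos_nat_mul_mem_cosPolynomials (by omega)))

noncomputable def chebyshevSum (s : Finset (ℕ × ℕ)) (c : ℕ × ℕ → ℝ) (x y : ℝ) : ℝ :=
  ∑ ij ∈ s, c ij * (T ℝ ij.1).eval x * (T ℝ ij.2).eval y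

theorem chebyshevSum_cos_cos (s : Finset (ℕ × ℕ)) (c : ℕ × ℕ → ℝ) (u v : ℝ) :
    chebyshevSum s c (cos u) (cos v) = ∑ ij ∈ s, c ij * (cos (ij.1 * u) * cos (ij.2 * v)) := by
  simp [chebyshevSum, T_real_cos, mul_assoc]

theorem chebyshevSum_comp_lissajous_mem_cosPolynomials {n p : ℕ} (hn : 0 < n)
    {s : Finset (ℕ × ℕ)} {c : ℕ × ℕ → ℝ} (hc : Function.support c ⊆ lissajousIndexSet n p) :
    (fun t => chebyshevSum s c (cos (n * t)) (cos ((n + p) * t))) ∈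
      cosPolynomials (n * (n + p)) := by
  have heq : (fun t => chebyshevSum s c (cos (n * t)) (cos ((n + p) * t))) =
      ∑ ij ∈ s, c ij • fun t => cos ((ij.1 * n : ℕ) * t) * cos ((ij.2 * (n + p) : ℕ) * t) := by
    funext t
    simp only [chebyshevSum_cos_cos, Finset.sum_apply, Pi.smul_apply, smul_eq_mul]
    refine sum_congr rfl fun ij _ => ?_
    push_cast
    ring_nf
  rw [heq]
  refine Submodule.sum_mem _ fun ij _ => ?_
  by_cases hij : c ij = 0
  · simp [hij]
  · exact Submodule.smul_mem _ _ (cos_mul_cos_mem_cosPolynomials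
      (weight_le_of_mem_lissajousIndexSet hn (hc hij)))

theorem integral_eval_T_real_measureT (m : ℤ) :
    ∫ x, (T ℝ m).eval x ∂measureT = if m = 0 then π else 0 := by
  split_ifs with hm
  · subst hm
    exact integral_eval_T_real_measureT_zero
  · exact integral_eval_T_real_measureT_of_ne_zero hm

theorem integral_cos_int_mul_mul_cos (a b : ℤ) :
    ∫ θ in 0..π, cos (a * θ) * cos (b * θ) =
      ((if a + b = 0 then π else 0) + (if a - b = 0 then π else 0)) / 2 := by
  simp_rw [← T_real_cos]
  rw [← integral_measureT_eq_integral_cos (f := fun x => (T ℝ a).eval x * (T ℝ b).eval x),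
    integral_eval_T_real_mul_eval_T_real_measureT, integral_eval_T_real_measureT,
    integral_eval_T_real_measureT]

theorem integral_mul_sqrt_inv_eq_integral_cos (f : ℝ → ℝ) :
    ∫ x in -1..1, f x * √(1 - x ^ 2)⁻¹ = ∫ θ in 0..π, f (cos θ) :=
  (integral_measureT f).symm.trans integral_measureT_eq_integral_cos

theorem integral_integral_div_sqrt_eq_integral_cos (R : ℝ → ℝ → ℝ) :
    ∫ x in -1..1, ∫ y in -1..1, R x y / (√(1 - x ^ 2) * √(1 - y ^ 2)) =
      ∫ θ in 0..π, ∫ φ in 0..π, R (cos θ) (cos φ) := by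
  have h : ∀ x y, R x y / (√(1 - x ^ 2) * √(1 - y ^ 2)) =
      R x y * √(1 - y ^ 2)⁻¹ * √(1 - x ^ 2)⁻¹ := fun x y => by
    rw [sqrt_inv, sqrt_inv]; ring
  simp_rw [h, intervalIntegral.integral_mul_const, integral_mul_sqrt_inv_eq_integral_cos]

theorem mul_add_mul_eq_zero_iff {N M a b : ℤ} (hcop : IsCoprime N M)
    (hsmall : |a| < M ∨ |b| < N) : a * N + b * M = 0 ↔ a = 0 ∧ b = 0 := by
  refine ⟨fun h => ?_, by rintro ⟨rfl, rfl⟩; simp⟩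
  rcases hsmall with ha | hb
  · obtain rfl : a = 0 :=
      Int.eq_zero_of_abs_lt_dvd (hcop.symm.dvd_of_dvd_mul_right ⟨-b, by linarith⟩) ha
    exact ⟨rfl, by simpa [((abs_nonneg _).trans_lt ha).ne'] using h⟩
  · obtain rfl : b = 0 :=
      Int.eq_zero_of_abs_lt_dvd (hcop.dvd_of_dvd_mul_right ⟨-a, by linarith⟩) hb
    exact ⟨by simpa [((abs_nonneg _).trans_lt hb).ne'] using h, rfl⟩

theorem integral_cos_mul_cos_of_isCoprime {N M : ℤ} (hcop : IsCoprime N M) {a b : ℤ}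
    (hsmall : |a| < M ∨ |b| < N) :
    ∫ θ in 0..π, cos (a * (N * θ)) * cos (b * (M * θ)) = if a = 0 ∧ b = 0 then π else 0 := by
  have hdiff : a * N - b * M = 0 ↔ a = 0 ∧ b = 0 := by
    simpa [sub_eq_add_neg] using mul_add_mul_eq_zero_iff hcop (b := -b) (by rwa [abs_neg])
  simp_rw [← mul_assoc]
  have := integral_cos_int_mul_mul_cos (a * N) (b * M)
  push_cast at this
  rw [this, if_congr (mul_add_mul_eq_zero_iff hcop hsmall) rfl rfl, if_congr hdiff rfl rfl]
  ring

theorem integral_cos_four_of_coprime {N M : ℕ} (hcop : N.Coprime M) {i j k l : ℕ}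
    (h : i + k < M ∨ j + l < N) :
    ∫ θ in 0..π, cos (i * (N * θ)) * cos (j * (M * θ)) * (cos (k * (N * θ)) * cos (l * (M * θ))) =
      (∫ θ in 0..π, cos (i * θ) * cos (k * θ)) * (∫ θ in 0..π, cos (j * θ) * cos (l * θ)) / π := by
  have key (a b : ℤ) (ha : |a| ≤ i + k) (hb : |b| ≤ j + l) :
      ∫ θ in 0..π, cos (a * ((N : ℤ) * θ)) * cos (b * ((M : ℤ) * θ)) =
        if a = 0 ∧ b = 0 then π else 0 :=
    integral_cos_mul_cos_of_isCoprime (Nat.isCoprime_iff_coprime.2 hcop) (by omega)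
  have hexp (θ : ℝ) :
      cos (i * (N * θ)) * cos (j * (M * θ)) * (cos (k * (N * θ)) * cos (l * (M * θ))) =
        (cos (((i + k : ℤ) : ℝ) * ((N : ℤ) * θ)) * cos (((j + l : ℤ) : ℝ) * ((M : ℤ) * θ)) +
          cos (((i + k : ℤ) : ℝ) * ((N : ℤ) * θ)) * cos (((j - l : ℤ) : ℝ) * ((M : ℤ) * θ)) +
          cos (((i - k : ℤ) : ℝ) * ((N : ℤ) * θ)) * cos (((j + l : ℤ) : ℝ) * ((M : ℤ) * θ)) +
          cos (((i - k : ℤ) : ℝ) * ((N : ℤ) * θ)) * cos (((j - l : ℤ) : ℝ) * ((M : ℤ) * θ))) / 4 := by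
    push_cast
    simp only [add_mul, sub_mul, cos_add, cos_sub]
    ring
  have hint (a b : ℤ) : IntervalIntegrable
      (fun θ => cos (a * ((N : ℤ) * θ)) * cos (b * ((M : ℤ) * θ))) MeasureTheory.volume 0 π :=
    Continuous.intervalIntegrable (by fun_prop) _ _
  have hik := integral_cos_int_mul_mul_cos i k
  have hjl := integral_cos_int_mul_mul_cos j l
  simp only [Int.cast_natCast] at hik hjl
  rw [intervalIntegral.integral_congr (fun θ _ => hexp θ), intervalIntegral.integral_div,
    intervalIntegral.integral_add (((hint _ _).add (hint _ _)).add (hint _ _)) (hint _ _),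
    intervalIntegral.integral_add ((hint _ _).add (hint _ _)) (hint _ _),
    intervalIntegral.integral_add (hint _ _) (hint _ _), key, key, key, key, hik, hjl]
  · simp only [ite_and]
    split_ifs <;> field_simp <;> ring
  all_goals exact abs_le.2 ⟨by omega, by omega⟩

theorem intervalIntegral.integral_sum_sum {ι κ : Type*} (s : Finset ι) (s' : Finset κ)
    {f : ι → κ → ℝ → ℝ} (hf : ∀ i j, Continuous (f i j)) (a b : ℝ) :
    ∫ t in a..b, ∑ i ∈ s, ∑ j ∈ s', f i j t = ∑ i ∈ s, ∑ j ∈ s', ∫ t in a..b, f i j t := by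
  rw [intervalIntegral.integral_finsetSum fun i _ =>
    (continuous_finsetSum _ fun j _ => hf i j).intervalIntegrable a b]
  exact sum_congr rfl fun i _ =>
    intervalIntegral.integral_finsetSum fun j _ => (hf i j).intervalIntegrable a b

theorem integral_chebyshevSum_mul_chebyshevSum (s : Finset (ℕ × ℕ)) (c d : ℕ × ℕ → ℝ) :
    ∫ θ in 0..π, ∫ φ in 0..π,
        chebyshevSum s c (cos θ) (cos φ) * chebyshevSum s d (cos θ) (cos φ) =
      ∑ ij ∈ s, ∑ kl ∈ s, c ij * d kl * ((∫ θ in 0..π, cos (ij.1 * θ) * cos (kl.1 * θ)) *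
        ∫ φ in 0..π, cos (ij.2 * φ) * cos (kl.2 * φ)) := by
  simp_rw [chebyshevSum_cos_cos, sum_mul_sum]
  rw [intervalIntegral.integral_congr fun θ _ => intervalIntegral.integral_sum_sum _ _
    (fun _ _ => by fun_prop) _ _, intervalIntegral.integral_sum_sum _ _ (fun _ _ => by fun_prop)]
  refine sum_congr rfl fun ij _ => sum_congr rfl fun kl _ => ?_
  have hsep (θ φ : ℝ) :
      c ij * (cos (ij.1 * θ) * cos (ij.2 * φ)) * (d kl * (cos (kl.1 * θ) * cos (kl.2 * φ))) =
        c ij * d kl * (cos (ij.1 * θ) * cos (kl.1 * θ)) * (cos (ij.2 * φ) * cos (kl.2 * φ)) := by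
    ring
  simp only [hsep, intervalIntegral.integral_const_mul, intervalIntegral.integral_mul_const]
  ring

theorem integral_chebyshevSum_comp_lissajous_mul (s : Finset (ℕ × ℕ)) (c d : ℕ × ℕ → ℝ)
    (n p : ℕ) :
    ∫ t in 0..π, chebyshevSum s c (cos (n * t)) (cos ((n + p) * t)) *
        chebyshevSum s d (cos (n * t)) (cos ((n + p) * t)) =
      ∑ ij ∈ s, ∑ kl ∈ s, c ij * d kl *
        ∫ t in 0..π, cos (ij.1 * (n * t)) * cos (ij.2 * ((n + p) * t)) *
          (cos (kl.1 * (n * t)) * cos (kl.2 * ((n + p) * t))) := by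
  simp_rw [chebyshevSum_cos_cos, sum_mul_sum, mul_mul_mul_comm,
    ← intervalIntegral.integral_const_mul]
  exact intervalIntegral.integral_sum_sum _ _ (fun _ _ => by fun_prop) _ _

theorem chebyshevSum_inner_eq_integral_lissajous {n p : ℕ} (hn : 0 < n)
    (hcop : n.Coprime (n + p)) {s : Finset (ℕ × ℕ)} {c d : ℕ × ℕ → ℝ}
    (hc : Function.support c ⊆ lissajousIndexSet n p)
    (hd : Function.support d ⊆ lissajousIndexSet n p) :
    (1 / π ^ 2) * ∫ x in -1..1, ∫ y in -1..1,
        chebyshevSum s c x y * chebyshevSum s d x y / (√(1 - x ^ 2) * √(1 - y ^ 2)) =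
      (1 / π) * ∫ t in 0..π, chebyshevSum s c (cos (n * t)) (cos ((n + p) * t)) *
        chebyshevSum s d (cos (n * t)) (cos ((n + p) * t)) := by
  rw [integral_integral_div_sqrt_eq_integral_cos (fun x y => chebyshevSum s c x y * chebyshevSum s d x y),
    integral_chebyshevSum_mul_chebyshevSum, integral_chebyshevSum_comp_lissajous_mul,
    mul_sum, mul_sum]
  refine sum_congr rfl fun ij _ => ?_
  rw [mul_sum, mul_sum]
  refine sum_congr rfl fun kl _ => ?_
  by_cases hcd : c ij * d kl = 0
  · simp [hcd]
  have hfour := integral_cos_four_of_coprime hcop (add_lt_or_add_lt_of_mem_lissajousIndexSet hn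
    (hc (left_ne_zero_of_mul hcd)) (hd (right_ne_zero_of_mul hcd)))
  push_cast at hfour
  rw [hfour]
  ring

theorem restriction_operator_isometry_general (n p : ℕ) (hn : 0 < n)
    (hcop : Nat.Coprime n (n + p))
    (c d : ℕ × ℕ → ℝ)
    (hc : ∀ i j : ℕ,
      ¬((i : ℝ) / (n + p) + (j : ℝ) / n < 1 ∨ (i, j) = (0, n)) → c (i, j) = 0)
    (hd : ∀ i j : ℕ,
      ¬((i : ℝ) / (n + p) + (j : ℝ) / n < 1 ∨ (i, j) = (0, n)) → d (i, j) = 0)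
    (P Q : ℝ → ℝ → ℝ)
    (hP : ∀ x y, P x y = ∑ ij ∈ Finset.range (n + p) ×ˢ Finset.range (n + 1),
      c ij * (Polynomial.Chebyshev.T ℝ ij.1).eval x * (Polynomial.Chebyshev.T ℝ ij.2).eval y)
    (hQ : ∀ x y, Q x y = ∑ ij ∈ Finset.range (n + p) ×ˢ Finset.range (n + 1),
      d ij * (Polynomial.Chebyshev.T ℝ ij.1).eval x * (Polynomial.Chebyshev.T ℝ ij.2).eval y) :
    (∃ a : ℕ → ℝ, ∀ t,
      P (Real.cos (n * t)) (Real.cos ((n + p) * t)) =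
        ∑ m ∈ Finset.range (n * (n + p) + 1), a m * Real.cos (m * t)) ∧
    (1 / π ^ 2) * ∫ x in (-1 : ℝ)..1, ∫ y in (-1 : ℝ)..1,
        P x y * Q x y / (Real.sqrt (1 - x ^ 2) * Real.sqrt (1 - y ^ 2)) =
      (1 / π) * ∫ t in (0 : ℝ)..π,
        P (Real.cos (n * t)) (Real.cos ((n + p) * t)) *
          Q (Real.cos (n * t)) (Real.cos ((n + p) * t)) := by
  have hcΓ : Function.support c ⊆ lissajousIndexSet n p :=
    fun ij hij => by_contra fun h => hij (hc ij.1 ij.2 h)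
  have hdΓ : Function.support d ⊆ lissajousIndexSet n p :=
    fun ij hij => by_contra fun h => hij (hd ij.1 ij.2 h)
  obtain rfl : P = chebyshevSum _ c := funext₂ hP
  obtain rfl : Q = chebyshevSum _ d := funext₂ hQ
  exact ⟨chebyshevSum_comp_lissajous_mem_cosPolynomials hn hcΓ,
    chebyshevSum_inner_eq_integral_lissajous hn hcop hcΓ hdΓ⟩

theorem restriction_operator_isometry (n p : ℕ) (hn : 0 < n) (hp : 0 < p)
    (hcop : Nat.Coprime n (n + p))
    (c d : ℕ × ℕ → ℝ)
    (hc : ∀ i j : ℕ,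
      ¬((i : ℝ) / (n + p) + (j : ℝ) / n < 1 ∨ (i, j) = (0, n)) → c (i, j) = 0)
    (hd : ∀ i j : ℕ,
      ¬((i : ℝ) / (n + p) + (j : ℝ) / n < 1 ∨ (i, j) = (0, n)) → d (i, j) = 0)
    (P Q : ℝ → ℝ → ℝ)
    (hP : ∀ x y, P x y = ∑ ij ∈ Finset.range (n + p) ×ˢ Finset.range (n + 1),
      c ij * (Polynomial.Chebyshev.T ℝ ij.1).eval x * (Polynomial.Chebyshev.T ℝ ij.2).eval y)
    (hQ : ∀ x y, Q x y = ∑ ij ∈ Finset.range (n + p) ×ˢ Finset.range (n + 1),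
      d ij * (Polynomial.Chebyshev.T ℝ ij.1).eval x * (Polynomial.Chebyshev.T ℝ ij.2).eval y) :
    (∃ a : ℕ → ℝ, ∀ t,
      P (Real.cos (n * t)) (Real.cos ((n + p) * t)) =
        ∑ m ∈ Finset.range (n * (n + p) + 1), a m * Real.cos (m * t)) ∧
    (1 / π ^ 2) * ∫ x in (-1 : ℝ)..1, ∫ y in (-1 : ℝ)..1,
        P x y * Q x y / (Real.sqrt (1 - x ^ 2) * Real.sqrt (1 - y ^ 2)) =
      (1 / π) * ∫ t in (0 : ℝ)..π,
        P (Real.cos (n * t)) (Real.cos ((n + p) * t)) *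
          Q (Real.cos (n * t)) (Real.cos ((n + p) * t)) :=
  restriction_operator_isometry_general n p hn hcop c d hc hd P Q hP hQ
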